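/- arXiv:1309.3480 — 6 statements merged into one kernel-verified Lean document; each statement's English description precedes it below -/
import Mathlib

section
/- Let V be a complex vector space with a nondegenerate skew-symmetric bilinear form ω, and suppose V carries a commutative associative bilinear multiplication such that every left-multiplication operator μ_u is skew-symmetric with respect to ω. Then u·(v·w) = 0 for all u, v, w ∈ V. -/
theorem stmt2 (V : Type*) [AddCommGroup V] [Module ℂ V] [FiniteDimensional ℂ V]
    (ω : V →ₗ[ℂ] V →ₗ[ℂ] ℂ)
    (hskewform : ∀ v w : V, ω v w = - ω w v)
    (hnd : ∀ v : V, (∀ w : V, ω v w = 0) → v = 0)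
    (m : V →ₗ[ℂ] V →ₗ[ℂ] V)
    (hcomm : ∀ u v : V, m u v = m v u)
    (hassoc : ∀ u v w : V, m (m u v) w = m u (m v w))
    (hskew : ∀ u v w : V, ω (m u v) w = - ω v (m u w)) :
    ∀ u v w : V, m u (m v w) = 0 := by
  intro u v w
  apply hnd
  intro x
  have key : ω (m u (m v w)) x = - ω (m u (m v w)) x := by
    calc ω (m u (m v w)) x = - ω (m v w) (m u x) := hskew u (m v w) x
      _ = ω w (m v (m u x)) := by rw [hskew v w (m u x)]; ring
      _ = ω w (m (m u v) x) := by rw [← hassoc, hcomm v u]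
      _ = - ω (m (m u v) x) w := hskewform _ _
      _ = ω x (m (m u v) w) := by rw [hskew (m u v) x w]; ring
      _ = ω x (m u (m v w)) := by rw [hassoc]
      _ = - ω (m u (m v w)) x := hskewform _ _
  linear_combination key / 2
end

section
/- Let V be a complex vector space with a nondegenerate skew-symmetric bilinear form ω. Let c be a totally symmetric trilinear form on V, and suppose there exists a coisotropic subspace Y ⊆ V (i.e. Y contains its ω-orthogonal complement) such that c(y, v, w) = 0 for all y ∈ Y, v, w ∈ V. Define a multiplication on V by requiring ω(u·v, w) = c(u,v,w) for all w. Then this multiplication is commutative, associative, and all its left-multiplication operators are skew-symmetric with respect to ω. -/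
theorem stmt6 (V : Type*) [AddCommGroup V] [Module ℂ V] [FiniteDimensional ℂ V]
    (ω : V →ₗ[ℂ] V →ₗ[ℂ] ℂ)
    (hskewform : ∀ v w : V, ω v w = - ω w v)
    (hnd : ∀ v : V, (∀ w : V, ω v w = 0) → v = 0)
    (c : V →ₗ[ℂ] V →ₗ[ℂ] V →ₗ[ℂ] ℂ)
    (hc1 : ∀ u v w : V, c u v w = c v u w)
    (hc2 : ∀ u v w : V, c u v w = c u w v)
    (Y : Submodule ℂ V)
    (hcoiso : ∀ x : V, (∀ y ∈ Y, ω x y = 0) → x ∈ Y)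
    (hcY : ∀ y ∈ Y, ∀ v w : V, c y v w = 0)
    (m : V →ₗ[ℂ] V →ₗ[ℂ] V)
    (hm : ∀ u v w : V, ω (m u v) w = c u v w) :
    (∀ u v : V, m u v = m v u) ∧
    (∀ u v w : V, m (m u v) w = m u (m v w)) ∧
    (∀ u v w : V, ω (m u v) w = - ω v (m u w)) := by
  have hsub : ∀ a b : V, (∀ w, ω a w = ω b w) → a = b := by
    intro a b hab
    have h : a - b = 0 := by
      apply hnd
      intro w
      simp [map_sub, hab w]
    have := sub_eq_zero.mp h
    exact this
  have hmY : ∀ u v : V, m u v ∈ Y := by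
    intro u v
    apply hcoiso
    intro y hy
    rw [hm]
    rw [hc2, hc1, hcY y hy]
  have hzero : ∀ u v w : V, m (m u v) w = 0 := by
    intro u v w
    apply hnd
    intro x
    rw [hm, hcY _ (hmY u v)]
  refine ⟨?_, ?_, ?_⟩
  · intro u v
    apply hsub
    intro w
    rw [hm, hm, hc1]
  · intro u v w
    have h2 : m u (m v w) = 0 := by
      apply hnd
      intro x
      rw [hm, hc1, hcY _ (hmY v w)]
    rw [hzero, h2]
  · intro u v w
    rw [hm, hskewform v (m u w), hm, neg_neg, hc2, hc1]
end

section
/- With the setup of the previous statement (𝔲⁻ abelian, [𝔩,𝔲⁻] ⊆ 𝔲⁻, 𝔩 ∩ 𝔲⁻ = 0, φ : 𝔲⁻ → 𝔩 linear, and 𝔞 = {u + φ(u)} an abelian subalgebra), define a multiplication on 𝔲⁻ by u * v := [φ(u), v]. Then this multiplication is commutative and associative. -/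
theorem stmt10 (𝔤 : Type*) [LieRing 𝔤] [LieAlgebra ℂ 𝔤]
    (𝔲 𝔩 : LieSubalgebra ℂ 𝔤)
    (hab : ∀ u v : 𝔲, ⁅(u : 𝔤), (v : 𝔤)⁆ = 0)
    (hbr : ∀ (x : 𝔩) (u : 𝔲), ⁅(x : 𝔤), (u : 𝔤)⁆ ∈ 𝔲)
    (hint : ∀ x : 𝔤, x ∈ 𝔩 → x ∈ 𝔲 → x = 0)
    (φ : 𝔲 →ₗ[ℂ] 𝔩)
    (ha : ∀ u v : 𝔲, ⁅(u : 𝔤) + (φ u : 𝔤), (v : 𝔤) + (φ v : 𝔤)⁆ = 0)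
    (mul : 𝔲 → 𝔲 → 𝔲)
    (hmul : ∀ u v : 𝔲, ((mul u v : 𝔲) : 𝔤) = ⁅(φ u : 𝔤), (v : 𝔤)⁆) :
    ∀ u v w : 𝔲, mul u v = mul v u ∧ mul (mul u v) w = mul u (mul v w) := by
  -- key decomposition: for all u v, the 𝔩-part and 𝔲-part both vanish
  have key : ∀ u v : 𝔲, ⁅(φ u : 𝔤), (φ v : 𝔤)⁆ = 0 ∧
      ⁅(φ u : 𝔤), (v : 𝔤)⁆ = ⁅(φ v : 𝔤), (u : 𝔤)⁆ := by
    intro u v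
    have h := ha u v
    rw [add_lie, lie_add, lie_add, hab u v] at h
    -- h : 0 + ⁅u, φ v⁆ + (⁅φ u, v⁆ + ⁅φ u, φ v⁆) = 0
    have h' : ⁅(φ u : 𝔤), (φ v : 𝔤)⁆ +
        (⁅(φ u : 𝔤), (v : 𝔤)⁆ - ⁅(φ v : 𝔤), (u : 𝔤)⁆) = 0 := by
      have : ⁅(u : 𝔤), (φ v : 𝔤)⁆ = -⁅(φ v : 𝔤), (u : 𝔤)⁆ := by
        rw [lie_skew]
      rw [this] at h
      linear_combination (norm := abel) h
    have hxl : ⁅(φ u : 𝔤), (φ v : 𝔤)⁆ ∈ 𝔩 := 𝔩.lie_mem (φ u).2 (φ v).2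
    have hyu : (⁅(φ u : 𝔤), (v : 𝔤)⁆ - ⁅(φ v : 𝔤), (u : 𝔤)⁆) ∈ 𝔲 :=
      sub_mem (hbr (φ u) v) (hbr (φ v) u)
    have hxu : ⁅(φ u : 𝔤), (φ v : 𝔤)⁆ ∈ 𝔲 := by
      have : ⁅(φ u : 𝔤), (φ v : 𝔤)⁆ =
          -(⁅(φ u : 𝔤), (v : 𝔤)⁆ - ⁅(φ v : 𝔤), (u : 𝔤)⁆) := by
        linear_combination (norm := abel) h'
      rw [this]; exact neg_mem hyu
    have hx0 := hint _ hxl hxu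
    constructor
    · exact hx0
    · have : ⁅(φ u : 𝔤), (v : 𝔤)⁆ - ⁅(φ v : 𝔤), (u : 𝔤)⁆ = 0 := by
        rw [hx0] at h'; linear_combination (norm := abel) h'
      linear_combination (norm := abel) this
  have comm : ∀ u v : 𝔲, mul u v = mul v u := by
    intro u v
    apply Subtype.ext
    rw [hmul, hmul, (key u v).2]
  intro u v w
  refine ⟨comm u v, ?_⟩
  rw [comm (mul u v) w]
  apply Subtype.ext
  rw [hmul, hmul, hmul, hmul]
  rw [leibniz_lie, (key w u).1, zero_lie, zero_add]
  congr 1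
  have := congrArg (Subtype.val) (comm w v)
  rw [hmul, hmul] at this
  exact this
end

section
/- Conversely: let 𝔲⁻ be an abelian subalgebra of a Lie algebra 𝔤 and 𝔩 a subalgebra with [𝔩,𝔲⁻] ⊆ 𝔲⁻, 𝔩 ∩ 𝔲⁻ = 0, such that the adjoint representation of 𝔩 on 𝔲⁻ is faithful. Suppose a bilinear multiplication on 𝔲⁻ is commutative, associative, and every left-multiplication operator equals ad(g)|_{𝔲⁻} for some g ∈ 𝔩. Then 𝔞 = {u + φ(u) : u ∈ 𝔲⁻}, where φ(u) ∈ 𝔩 is the unique element with ad(φ(u))|_{𝔲⁻} = μ_u, is an abelian Lie subalgebra of 𝔤. -/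
theorem stmt11 (𝔤 : Type*) [LieRing 𝔤] [LieAlgebra ℂ 𝔤]
    (𝔲 𝔩 : LieSubalgebra ℂ 𝔤)
    (hab : ∀ u v : 𝔲, ⁅(u : 𝔤), (v : 𝔤)⁆ = 0)
    (hbr : ∀ (x : 𝔩) (u : 𝔲), ⁅(x : 𝔤), (u : 𝔤)⁆ ∈ 𝔲)
    (hint : ∀ x : 𝔤, x ∈ 𝔩 → x ∈ 𝔲 → x = 0)
    (hfaith : ∀ x : 𝔩, (∀ u : 𝔲, ⁅(x : 𝔤), (u : 𝔤)⁆ = 0) → x = 0)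
    (mul : 𝔲 →ₗ[ℂ] 𝔲 →ₗ[ℂ] 𝔲)
    (hcomm : ∀ u v : 𝔲, mul u v = mul v u)
    (hassoc : ∀ u v w : 𝔲, mul (mul u v) w = mul u (mul v w))
    (φ : 𝔲 → 𝔩)
    (hφ : ∀ u v : 𝔲, ((mul u v : 𝔲) : 𝔤) = ⁅((φ u : 𝔩) : 𝔤), (v : 𝔤)⁆) :
    ∀ u v : 𝔲, ⁅(u : 𝔤) + (φ u : 𝔤), (v : 𝔤) + (φ v : 𝔤)⁆ = 0 := by
  intro u v
  have hbrack : ⁅φ u, φ v⁆ = (0 : 𝔩) := by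
    apply hfaith
    intro w
    have key : ⁅((φ u : 𝔩) : 𝔤), ⁅((φ v : 𝔩) : 𝔤), (w : 𝔤)⁆⁆
        = ⁅((φ v : 𝔩) : 𝔤), ⁅((φ u : 𝔩) : 𝔤), (w : 𝔤)⁆⁆ := by
      rw [← hφ v w, ← hφ u w, ← hφ u (mul v w), ← hφ v (mul u w)]
      have : mul u (mul v w) = mul v (mul u w) := by
        rw [← hassoc, hcomm u v, hassoc]
      rw [this]
    have hc : ((⁅φ u, φ v⁆ : 𝔩) : 𝔤) = ⁅((φ u : 𝔩) : 𝔤), ((φ v : 𝔩) : 𝔤)⁆ := rfl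
    rw [hc, lie_lie, key, sub_self]
  have h1 : ⁅(u : 𝔤), (φ v : 𝔤)⁆ = -((mul v u : 𝔲) : 𝔤) := by
    rw [hφ v u, lie_skew]
  have h2 : ⁅((φ u : 𝔩) : 𝔤), (v : 𝔤)⁆ = ((mul u v : 𝔲) : 𝔤) := (hφ u v).symm
  have h3 : ⁅((φ u : 𝔩) : 𝔤), ((φ v : 𝔩) : 𝔤)⁆ = 0 := by
    have := congrArg (Subtype.val) hbrack
    simpa using this
  rw [add_lie, lie_add, lie_add, hab u v, h1, h2, h3]
  have : ((mul u v : 𝔲) : 𝔤) = ((mul v u : 𝔲) : 𝔤) := by rw [hcomm]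
  rw [this]
  abel
end

section
/- Let A be the (non-unital) subalgebra of ℂ[x,y]/(x⁵ + y⁵ − x³y³, x⁴y, xy⁴) generated by x and y. Then every monomial in x, y of total degree at least 7 is zero in A; in particular x⁷ = 0 and y⁷ = 0 in A. -/
open MvPolynomial in
theorem stmt15 :
    ∀ I : Ideal (MvPolynomial (Fin 2) ℂ),
      I = Ideal.span { (X 0 : MvPolynomial (Fin 2) ℂ) ^ 5 + X 1 ^ 5 - X 0 ^ 3 * X 1 ^ 3,
            (X 0 : MvPolynomial (Fin 2) ℂ) ^ 4 * X 1,
            (X 0 : MvPolynomial (Fin 2) ℂ) * X 1 ^ 4 } →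
      (∀ a b : ℕ, 7 ≤ a + b →
          Ideal.Quotient.mk I ((X 0 : MvPolynomial (Fin 2) ℂ) ^ a * X 1 ^ b) = 0) ∧
      Ideal.Quotient.mk I ((X 0 : MvPolynomial (Fin 2) ℂ) ^ 7) = 0 ∧
      Ideal.Quotient.mk I ((X 1 : MvPolynomial (Fin 2) ℂ) ^ 7) = 0 := by
  intro I hI
  have hf : (X 0 : MvPolynomial (Fin 2) ℂ) ^ 5 + X 1 ^ 5 - X 0 ^ 3 * X 1 ^ 3 ∈ I := by
    rw [hI]; exact Ideal.subset_span (by simp)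
  have hg : (X 0 : MvPolynomial (Fin 2) ℂ) ^ 4 * X 1 ∈ I := by
    rw [hI]; exact Ideal.subset_span (by simp)
  have hh : (X 0 : MvPolynomial (Fin 2) ℂ) * X 1 ^ 4 ∈ I := by
    rw [hI]; exact Ideal.subset_span (by simp)
  have hx7 : (X 0 : MvPolynomial (Fin 2) ℂ) ^ 7 ∈ I := by
    have e : (X 0 : MvPolynomial (Fin 2) ℂ) ^ 7 =
        X 0 ^ 2 * ((X 0 : MvPolynomial (Fin 2) ℂ) ^ 5 + X 1 ^ 5 - X 0 ^ 3 * X 1 ^ 3)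
        + (X 0 * X 1 ^ 2) * ((X 0 : MvPolynomial (Fin 2) ℂ) ^ 4 * X 1)
        - (X 0 * X 1) * ((X 0 : MvPolynomial (Fin 2) ℂ) * X 1 ^ 4) := by ring
    rw [e]
    exact Ideal.sub_mem _ (Ideal.add_mem _ (Ideal.mul_mem_left _ _ hf)
      (Ideal.mul_mem_left _ _ hg)) (Ideal.mul_mem_left _ _ hh)
  have hy7 : (X 1 : MvPolynomial (Fin 2) ℂ) ^ 7 ∈ I := by
    have e : (X 1 : MvPolynomial (Fin 2) ℂ) ^ 7 =
        X 1 ^ 2 * ((X 0 : MvPolynomial (Fin 2) ℂ) ^ 5 + X 1 ^ 5 - X 0 ^ 3 * X 1 ^ 3)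
        - (X 0 * X 1) * ((X 0 : MvPolynomial (Fin 2) ℂ) ^ 4 * X 1)
        + (X 0 ^ 2 * X 1) * ((X 0 : MvPolynomial (Fin 2) ℂ) * X 1 ^ 4) := by ring
    rw [e]
    exact Ideal.add_mem _ (Ideal.sub_mem _ (Ideal.mul_mem_left _ _ hf)
      (Ideal.mul_mem_left _ _ hg)) (Ideal.mul_mem_left _ _ hh)
  have key : ∀ a b : ℕ, 7 ≤ a + b → (X 0 : MvPolynomial (Fin 2) ℂ) ^ a * X 1 ^ b ∈ I := by
    intro a b hab
    rcases Nat.eq_zero_or_pos b with hb | hb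
    · subst hb
      obtain ⟨c, rfl⟩ : ∃ c, a = c + 7 := ⟨a - 7, by omega⟩
      have e : (X 0 : MvPolynomial (Fin 2) ℂ) ^ (c + 7) * X 1 ^ 0
          = X 0 ^ c * X 0 ^ 7 := by ring
      rw [e]; exact Ideal.mul_mem_left _ _ hx7
    rcases Nat.eq_zero_or_pos a with ha | ha
    · subst ha
      obtain ⟨c, rfl⟩ : ∃ c, b = c + 7 := ⟨b - 7, by omega⟩
      have e : (X 0 : MvPolynomial (Fin 2) ℂ) ^ 0 * X 1 ^ (c + 7)
          = X 1 ^ c * X 1 ^ 7 := by ring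
      rw [e]; exact Ideal.mul_mem_left _ _ hy7
    rcases le_or_gt 4 a with ha4 | ha4
    · obtain ⟨c, rfl⟩ : ∃ c, a = c + 4 := ⟨a - 4, by omega⟩
      obtain ⟨d, rfl⟩ : ∃ d, b = d + 1 := ⟨b - 1, by omega⟩
      have e : (X 0 : MvPolynomial (Fin 2) ℂ) ^ (c + 4) * X 1 ^ (d + 1)
          = (X 0 ^ c * X 1 ^ d) * (X 0 ^ 4 * X 1) := by ring
      rw [e]; exact Ideal.mul_mem_left _ _ hg
    rcases le_or_gt 4 b with hb4 | hb4
    · obtain ⟨c, rfl⟩ : ∃ c, a = c + 1 := ⟨a - 1, by omega⟩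
      obtain ⟨d, rfl⟩ : ∃ d, b = d + 4 := ⟨b - 4, by omega⟩
      have e : (X 0 : MvPolynomial (Fin 2) ℂ) ^ (c + 1) * X 1 ^ (d + 4)
          = (X 0 ^ c * X 1 ^ d) * (X 0 * X 1 ^ 4) := by ring
      rw [e]; exact Ideal.mul_mem_left _ _ hh
    omega
  exact ⟨fun a b hab => (Ideal.Quotient.eq_zero_iff_mem).2 (key a b hab),
    (Ideal.Quotient.eq_zero_iff_mem).2 hx7, (Ideal.Quotient.eq_zero_iff_mem).2 hy7⟩
end

section
/- Let V and W be finite-dimensional complex vector spaces with dim V, dim W ≥ 2, and consider End(V ⊗ W). If x ∈ End(V) and y ∈ End(W) both have trace zero and are both nonzero, then the operator (x ⊗ id_W + id_V ⊗ y)² does not lie in the subspace ⟨id_V⟩ ⊗ End(W) + End(V) ⊗ ⟨id_W⟩ of End(V ⊗ W). -/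
open TensorProduct

lemma aux_scalar {K V : Type*} [Field K] [AddCommGroup V] [Module K V]
    (x : Module.End K V) (h : ∀ v : V, x v ∈ Submodule.span K {v}) :
    ∃ c : K, ∀ v : V, x v = c • v := by
  by_cases hV : ∀ v : V, v = 0
  · exact ⟨0, fun v => by rw [hV v, map_zero, smul_zero]⟩
  push_neg at hV
  obtain ⟨v₀, hv₀⟩ := hV
  obtain ⟨c, hc⟩ := Submodule.mem_span_singleton.mp (h v₀)
  refine ⟨c, fun v => ?_⟩
  by_cases hmem : v ∈ Submodule.span K {v₀}
  · obtain ⟨t, rfl⟩ := Submodule.mem_span_singleton.mp hmem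
    rw [map_smul, ← hc, smul_comm]
  · obtain ⟨d, hd⟩ := Submodule.mem_span_singleton.mp (h v)
    obtain ⟨e, he⟩ := Submodule.mem_span_singleton.mp (h (v + v₀))
    rw [map_add, ← hd, ← hc, smul_add] at he
    have key : (e - d) • v = (c - e) • v₀ := by
      rw [sub_smul, sub_smul, sub_eq_iff_eq_add]
      rw [← sub_eq_iff_eq_add'] at he
      rw [← he]; abel
    have hed : e = d := by
      by_contra hne
      exact hmem (by
        have : v = (e - d)⁻¹ • ((c - e) • v₀) := by
          rw [← key, inv_smul_smul₀ (sub_ne_zero.mpr hne)]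
        rw [this]
        exact Submodule.smul_mem _ _
          (Submodule.smul_mem _ _ (Submodule.mem_span_singleton_self v₀)))
    have hec : e = c := by
      rw [hed, sub_self, zero_smul, eq_comm] at key
      rcases smul_eq_zero.mp key with h' | h'
      · exact hed.trans (sub_eq_zero.mp h').symm
      · exact absurd h' hv₀
    rw [← hd, ← hed, hec]

lemma aux_trace {M : Type*} [AddCommGroup M] [Module ℂ M] [FiniteDimensional ℂ M]
    (hM : 2 ≤ Module.finrank ℂ M) (z : Module.End ℂ M)
    (ht : LinearMap.trace ℂ M z = 0) (c : ℂ) (hz : ∀ m : M, z m = c • m) : z = 0 := by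
  have hzid : z = c • LinearMap.id := by
    ext m; simp [hz m]
  rw [hzid, map_smul, LinearMap.trace_id, smul_eq_mul] at ht
  have hdim : (Module.finrank ℂ M : ℂ) ≠ 0 := by
    simp only [ne_eq, Nat.cast_eq_zero]
    omega
  have hc0 : c = 0 := by
    rcases mul_eq_zero.mp ht with h' | h'
    · exact h'
    · exact absurd h' hdim
  rw [hzid, hc0, zero_smul]

theorem stmt17 (V W : Type*) [AddCommGroup V] [Module ℂ V] [AddCommGroup W] [Module ℂ W]
    [FiniteDimensional ℂ V] [FiniteDimensional ℂ W]
    (hV : 2 ≤ Module.finrank ℂ V) (hW : 2 ≤ Module.finrank ℂ W)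
    (x : Module.End ℂ V) (y : Module.End ℂ W)
    (hx : x ≠ 0) (hy : y ≠ 0)
    (htx : LinearMap.trace ℂ V x = 0) (hty : LinearMap.trace ℂ W y = 0) :
    ¬ ∃ (f : Module.End ℂ V) (g : Module.End ℂ W),
      (TensorProduct.map x LinearMap.id + TensorProduct.map LinearMap.id y) ∘ₗ
        (TensorProduct.map x LinearMap.id + TensorProduct.map LinearMap.id y) =
      TensorProduct.map f LinearMap.id + TensorProduct.map LinearMap.id g := by
  rintro ⟨f, g, h⟩
  have hxs : ¬ ∀ v : V, x v ∈ Submodule.span ℂ {v} := by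
    intro hall
    obtain ⟨c, hc⟩ := aux_scalar x hall
    exact hx (aux_trace hV x htx c hc)
  push_neg at hxs
  obtain ⟨v, hv⟩ := hxs
  set π := (Submodule.span ℂ {v}).mkQ with hπdef
  have hπ : π (x v) ≠ 0 := by
    rw [hπdef, Submodule.mkQ_apply, ne_eq, Submodule.Quotient.mk_eq_zero]
    exact hv
  obtain ⟨ψ, hψ⟩ : ∃ ψ : Module.Dual ℂ (V ⧸ Submodule.span ℂ {v}), ψ (π (x v)) ≠ 0 := by
    by_contra hall
    push_neg at hall
    exact hπ ((Module.forall_dual_apply_eq_zero_iff ℂ _).mp hall)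
  set φ : Module.Dual ℂ V := ψ ∘ₗ π with hφdef
  have hφv : φ v = 0 := by
    have : π v = 0 := by
      rw [hπdef, Submodule.mkQ_apply, Submodule.Quotient.mk_eq_zero]
      exact Submodule.mem_span_singleton_self v
    simp [hφdef, this]
  have hφxv : φ (x v) ≠ 0 := hψ
  set c : ℂ := (2 * φ (x v))⁻¹ * (φ (f v) - φ (x (x v))) with hcdef
  have hyc : ∀ w : W, y w = c • w := by
    intro w
    have h1 := congrArg (fun T : TensorProduct ℂ V W →ₗ[ℂ] TensorProduct ℂ V W =>
      ((TensorProduct.lid ℂ W).toLinearMap ∘ₗ LinearMap.rTensor W φ) (T (v ⊗ₜ[ℂ] w))) h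
    simp only [LinearMap.comp_apply, LinearMap.add_apply, TensorProduct.map_tmul,
      LinearMap.id_coe, id_eq, map_add, LinearMap.rTensor_tmul, TensorProduct.lid_tmul,
      LinearEquiv.coe_coe, hφv, zero_smul, add_zero, zero_add] at h1
    have h2 : (2 * φ (x v)) • y w = (φ (f v) - φ (x (x v))) • w := by
      rw [two_mul, add_smul, sub_smul]
      rw [← h1]
      abel
    have h3 : (2 * φ (x v)) ≠ 0 := by
      simp [hφxv]
    rw [hcdef, mul_smul, ← h2, inv_smul_smul₀ h3]
  exact hy (aux_trace hW y hty c hyc)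
end
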